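/- For a fixed CFG and input of length n, the number of applications of the backward-initialization step of the variant satisfies 𝒱_4 ≤ (n+1) · (ℰ_1 + |{α | S → α ∈ P}|). -/

import Mathlib

/-! Formalization of Earley parsing and the Nederhof–Satta variant. -/

variable {T N : Type}

/-- A context-free grammar: a start nonterminal and a set of productions. -/
structure CFG (T N : Type) where
  initial : N
  rules : Set (N × List (Symbol T N))

/-- One rewriting step of the grammar. -/
def CFG.Produces (g : CFG T N) (u v : List (Symbol T N)) : Prop :=
  ∃ A α p q, (A, α) ∈ g.rules ∧ u = p ++ [Symbol.nonterminal A] ++ q ∧ v = p ++ α ++ q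

/-- The derivation relation ⇒* (reflexive-transitive closure of rewriting). -/
def CFG.Derives (g : CFG T N) : List (Symbol T N) → List (Symbol T N) → Prop :=
  Relation.ReflTransGen g.Produces

/-- The language of the grammar: { w | S ⇒* w }. -/
def CFG.language (g : CFG T N) : Set (List T) :=
  { w | g.Derives [Symbol.nonterminal g.initial] (w.map Symbol.terminal) }

/-- `inputSlice w i j` is the substring a_{i+1}⋯a_j of `w` (0-based: w[i..j)), as symbols. -/
def inputSlice (w : List T) (i j : ℕ) : List (Symbol T N) :=
  ((w.take j).drop i).map Symbol.terminal

/-- The least Earley table: `Earley g w A α β i j` means the dotted item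
[A → α • β] is inserted in E_{i,j}. -/
inductive Earley (g : CFG T N) (w : List T) :
    N → List (Symbol T N) → List (Symbol T N) → ℕ → ℕ → Prop where
  | init {α} : (g.initial, α) ∈ g.rules → Earley g w g.initial [] α 0 0
  | predict {B α A β i j γ} : Earley g w B α (Symbol.nonterminal A :: β) i j →
      (A, γ) ∈ g.rules → Earley g w A [] γ j j
  | scan {A α a β i j} : Earley g w A α (Symbol.terminal a :: β) i j →
      w[j]? = some a → Earley g w A (α ++ [Symbol.terminal a]) β i (j + 1)
  | complete {A α B β i k γ j} : Earley g w A α (Symbol.nonterminal B :: β) i k →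
      Earley g w B γ [] k j → (B, γ) ∈ g.rules →
      Earley g w A (α ++ [Symbol.nonterminal B]) β i j

mutual
  /-- Forward part of the variant: `VarU g w β j` means suffix item [β] ∈ U_j. -/
  inductive VarU (g : CFG T N) (w : List T) : List (Symbol T N) → ℕ → Prop where
    | init {α} : (g.initial, α) ∈ g.rules → VarU g w α 0
    | predict {A β j γ} : VarU g w (Symbol.nonterminal A :: β) j →
        (A, γ) ∈ g.rules → VarU g w γ j
    | scan {a β j} : VarU g w (Symbol.terminal a :: β) j → w[j]? = some a →
        VarU g w β (j + 1)
    | complete {B β k γ j} : VarU g w (Symbol.nonterminal B :: β) k → (B, γ) ∈ g.rules →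
        VarT g w γ k j → VarU g w β j

  /-- Backward part of the variant: `VarT g w β j m` means suffix item [β] ∈ T_{j,m}. -/
  inductive VarT (g : CFG T N) (w : List T) : List (Symbol T N) → ℕ → ℕ → Prop where
    | empty {m} : VarU g w [] m → VarT g w [] m m
    | scan {a β j m} : VarU g w (Symbol.terminal a :: β) j → w[j]? = some a →
        VarT g w β (j + 1) m → VarT g w (Symbol.terminal a :: β) j m
    | complete {B β k γ j m} : VarU g w (Symbol.nonterminal B :: β) k → (B, γ) ∈ g.rules →
        VarT g w γ k j → VarT g w β j m → VarT g w (Symbol.nonterminal B :: β) k m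
end

/-- Number of initialization steps: distinct right-hand sides of start productions. -/
noncomputable def countInit (g : CFG T N) : ℕ :=
  Set.ncard {α | (g.initial, α) ∈ g.rules}

/-- ℰ₁: applicable instantiations of Earley's prediction rule. -/
noncomputable def countE1 (g : CFG T N) (w : List T) : ℕ :=
  Set.ncard {x : N × List (Symbol T N) × N × List (Symbol T N) × ℕ × ℕ × List (Symbol T N) |
    match x with
      | (B, α, A, β, i, j, γ) =>
          Earley g w B α (Symbol.nonterminal A :: β) i j ∧ (A, γ) ∈ g.rules}

/-- ℰ₂: applicable instantiations of Earley's scanning rule. -/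
noncomputable def countE2 (g : CFG T N) (w : List T) : ℕ :=
  Set.ncard {x : N × List (Symbol T N) × T × List (Symbol T N) × ℕ × ℕ |
    match x with
      | (A, α, a, β, i, j) =>
          Earley g w A α (Symbol.terminal a :: β) i j ∧ w[j]? = some a}

/-- ℰ₃: applicable instantiations of Earley's completion rule. -/
noncomputable def countE3 (g : CFG T N) (w : List T) : ℕ :=
  Set.ncard {x : N × List (Symbol T N) × N × List (Symbol T N) × ℕ × ℕ × List (Symbol T N) × ℕ |
    match x with
      | (A, α, B, β, i, k, γ, j) =>
          Earley g w A α (Symbol.nonterminal B :: β) i k ∧ (B, γ) ∈ g.rules ∧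
        Earley g w B γ [] k j}

/-- 𝒱₁: applicable instantiations of the variant's forward prediction rule. -/
noncomputable def countV1 (g : CFG T N) (w : List T) : ℕ :=
  Set.ncard {x : N × List (Symbol T N) × ℕ × List (Symbol T N) |
    match x with
      | (A, β, j, γ) =>
          VarU g w (Symbol.nonterminal A :: β) j ∧ (A, γ) ∈ g.rules}

/-- 𝒱₂: applicable instantiations of the variant's forward scanning rule. -/
noncomputable def countV2 (g : CFG T N) (w : List T) : ℕ :=
  Set.ncard {x : T × List (Symbol T N) × ℕ |
    match x with
      | (a, β, j) =>
          VarU g w (Symbol.terminal a :: β) j ∧ w[j]? = some a}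

/-- 𝒱₃: applicable instantiations of the variant's forward completion rule. -/
noncomputable def countV3 (g : CFG T N) (w : List T) : ℕ :=
  Set.ncard {x : N × List (Symbol T N) × ℕ × List (Symbol T N) × ℕ |
    match x with
      | (B, β, k, γ, j) =>
          VarU g w (Symbol.nonterminal B :: β) k ∧ (B, γ) ∈ g.rules ∧ VarT g w γ k j}

/-- 𝒱₄: applicable instantiations of the variant's backward-initialization rule. -/
noncomputable def countV4 (g : CFG T N) (w : List T) : ℕ :=
  Set.ncard {m : ℕ | VarU g w [] m}

/-- 𝒱₅: applicable instantiations of the variant's backward scanning rule. -/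
noncomputable def countV5 (g : CFG T N) (w : List T) : ℕ :=
  Set.ncard {x : T × List (Symbol T N) × ℕ × ℕ |
    match x with
      | (a, β, j, m) =>
          VarU g w (Symbol.terminal a :: β) j ∧ w[j]? = some a ∧ VarT g w β (j + 1) m}

/-- 𝒱₆: applicable instantiations of the variant's backward completion rule. -/
noncomputable def countV6 (g : CFG T N) (w : List T) : ℕ :=
  Set.ncard {x : N × List (Symbol T N) × ℕ × List (Symbol T N) × ℕ × ℕ |
    match x with
      | (B, β, k, γ, j, m) =>
          VarU g w (Symbol.nonterminal B :: β) k ∧ (B, γ) ∈ g.rules ∧ VarT g w γ k j ∧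
        VarT g w β j m}

/-! Items of the forward tables `U_m` only occur at positions `m ≤ n`, and only if the start
symbol has a production; hence `𝒱₄ ≤ n + 1 ≤ (n + 1) · |{α | S → α ∈ P}|` whenever `𝒱₄ ≠ 0`. -/

section

variable {g : CFG T N} {w : List T}

mutual

theorem VarU.le_length {β : List (Symbol T N)} {j : ℕ} : VarU g w β j → j ≤ w.length
  | .init _ => Nat.zero_le _
  | .predict h _ => h.le_length
  | .scan _ ha => (List.getElem?_eq_some_iff.mp ha).1
  | .complete _ _ h => h.le_length

theorem VarT.le_length {β : List (Symbol T N)} {j m : ℕ} : VarT g w β j m → m ≤ w.length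
  | .empty h => h.le_length
  | .scan _ _ h => h.le_length
  | .complete _ _ _ h => h.le_length

end

theorem VarU.exists_initial_rule {β : List (Symbol T N)} {j : ℕ} :
    VarU g w β j → ∃ α, (g.initial, α) ∈ g.rules
  | .init hα => ⟨_, hα⟩
  | .predict h _ => h.exists_initial_rule
  | .scan h _ => h.exists_initial_rule
  | .complete h _ _ => h.exists_initial_rule

theorem countV4_le_length_succ : countV4 g w ≤ w.length + 1 := by
  calc countV4 g w ≤ (Set.Iic w.length).ncard :=
        Set.ncard_le_ncard (fun _ hm => VarU.le_length hm) (Set.finite_Iic _)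
    _ = w.length + 1 := Set.ncard_Iic_nat _

theorem countInit_pos (hfin : g.rules.Finite) {β : List (Symbol T N)} {j : ℕ}
    (h : VarU g w β j) : 0 < countInit g :=
  (Set.ncard_pos (hfin.preimage (Prod.mk_right_injective g.initial).injOn)).mpr
    h.exists_initial_rule

end

/-- 𝒱₄ ≤ (n+1) · (ℰ₁ + |{α | S → α ∈ P}|). -/
theorem variant_step4_le (g : CFG T N) (w : List T) (hfin : g.rules.Finite) :
    countV4 g w ≤ (w.length + 1) * (countE1 g w + countInit g) := by
  rcases Nat.eq_zero_or_pos (countV4 g w) with h0 | hpos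
  · simp [h0]
  obtain ⟨m, hm⟩ := Set.nonempty_of_ncard_ne_zero hpos.ne'
  calc countV4 g w ≤ w.length + 1 := countV4_le_length_succ
    _ ≤ (w.length + 1) * countInit g := Nat.le_mul_of_pos_right _ (countInit_pos hfin hm)
    _ ≤ (w.length + 1) * (countE1 g w + countInit g) :=
        Nat.mul_le_mul_left _ (Nat.le_add_left _ _)
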